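/- arXiv:2004.02946 — 6 statements merged into one kernel-verified Lean document; each statement's English description precedes it below -/
import Mathlib

section
/- For every subshift X over a finite alphabet Λ and every ε > 0 there exists l₀ ∈ ℕ such that every block B ∈ B*(X) of length l ≥ l₀ satisfies d*(B, M_σ(X)) < ε, i.e., there exists a shift-invariant measure μ ∈ M_σ(X) with d*(B, μ) < ε. -/
/-!
Otherwise there are blocks `Bₙ ∈ B*(X)` with `|Bₙ| → ∞` at `d*`-distance at least `ε` from
`M_σ(X)`. Realize `Bₙ` as the initial segment of a point `yₙ ∈ X` and let `νₙ` be the uniform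
measure on the first `|Bₙ|` points of the shift orbit of `yₙ`. Then `νₙ` is carried by `X`, is
shift-invariant up to `1/|Bₙ|`, and gives each cylinder `[C]` the frequency of `C` in `Bₙ` up to
`|C|/|Bₙ|` (only occurrences overhanging the end of `Bₙ` are missed). Probability measures on the
compact space `Λ^ℤ` form a compact space, so the `νₙ` have a weak limit point `μ` along an
ultrafilter. Cylinders are clopen, so their measures pass to the limit: `μ` is shift-invariant,
carried by the closed set `X`, and every term of the series defining `d*(Bₙ, μ)` tends to `0`.
The `l`-th term is at most `2⁻ˡ`, so by dominated convergence `d*(Bₙ, μ) → 0`, a contradiction.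
-/

open MeasureTheory

/-- The left shift on `ℤ → Λ`: `(shiftZ x) i = x (i+1)`. -/
def shiftZ {Λ : Type*} (x : ℤ → Λ) : ℤ → Λ := fun i => x (i + 1)

/-- The block `x|_{[i, i+k)}` of length `k`. -/
def blockAt {Λ : Type*} (x : ℤ → Λ) (i : ℤ) (k : ℕ) : List Λ :=
  List.ofFn fun j : Fin k => x (i + j.val)

/-- The frequency of occurrences of the block `C` in the block `B`. -/
noncomputable def Freq {Λ : Type*} (B C : List Λ) : ℝ :=
  (({i : ℕ | i + C.length ≤ B.length ∧
      ∀ j : Fin C.length, B[i + (j : ℕ)]? = C[(j : ℕ)]?}).ncard : ℝ) / (B.length : ℝ)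

/-- The set `B*(X)` of (nonempty) finite blocks occurring in elements of `X`. -/
def BlocksOf {Λ : Type*} (X : Set (ℤ → Λ)) : Set (List Λ) :=
  {B | B ≠ [] ∧ ∃ x ∈ X, ∃ i : ℤ, blockAt x i B.length = B}

/-- A subshift: a nonempty, closed, shift-invariant subset of `Λ^ℤ`. -/
def IsSubshift {Λ : Type*} [TopologicalSpace Λ] (X : Set (ℤ → Λ)) : Prop :=
  X.Nonempty ∧ IsClosed X ∧ shiftZ '' X = X

/-- The cylinder set associated with a block `C`. -/
def cyl {Λ : Type*} (C : List Λ) : Set (ℤ → Λ) :=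
  {x | ∀ j : Fin C.length, x ((j : ℕ) : ℤ) = C.get j}

/-- `M(X)`: Borel probability measures carried by `X`. -/
def MeasOf {Λ : Type*} [MeasurableSpace Λ] (X : Set (ℤ → Λ)) :
    Set (Measure (ℤ → Λ)) :=
  {μ | IsProbabilityMeasure μ ∧ μ X = 1}

/-- `M_σ(X)`: shift-invariant measures in `M(X)`. -/
def InvMeasOf {Λ : Type*} [MeasurableSpace Λ] (X : Set (ℤ → Λ)) :
    Set (Measure (ℤ → Λ)) :=
  {μ | μ ∈ MeasOf X ∧ Measure.map shiftZ μ = μ}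

/-- `M_σ^erg(X)`: ergodic measures in `M_σ(X)`. -/
def ErgMeasOf {Λ : Type*} [MeasurableSpace Λ] (X : Set (ℤ → Λ)) :
    Set (Measure (ℤ → Λ)) :=
  {μ | μ ∈ InvMeasOf X ∧ Ergodic shiftZ μ}

/-- An element of the combined space of blocks and measures. -/
abbrev Obj (Λ : Type*) [MeasurableSpace Λ] := List Λ ⊕ Measure (ℤ → Λ)

/-- The valuation of an object (block or measure) on a block `C`:
frequency for blocks, measure of the cylinder for measures. -/
noncomputable def objVal {Λ : Type*} [MeasurableSpace Λ] : Obj Λ → List Λ → ℝ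
  | Sum.inl B => fun C => Freq B C
  | Sum.inr μ => fun C => (μ (cyl C)).toReal

/-- The metric `d*` on the combined space of blocks and measures. -/
noncomputable def dStar {Λ : Type*} [Fintype Λ] [MeasurableSpace Λ]
    (ω₁ ω₂ : Obj Λ) : ℝ :=
  ∑' l : ℕ, (2 : ℝ) ^ (-(l : ℤ) - 1) *
    ∑ C : Fin (l + 1) → Λ, |objVal ω₁ (List.ofFn C) - objVal ω₂ (List.ofFn C)|

open Filter Set Topology
open scoped ENNReal Finset

section OrbitMeasure

variable {α : Type*} [MeasurableSpace α]

noncomputable def orbitMeasure (T : α → α) (x : α) (n : ℕ) : Measure α :=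
  (n : ℝ≥0∞)⁻¹ • ∑ k ∈ Finset.range n, Measure.dirac (T^[k] x)

open Classical in
lemma orbitMeasure_apply (T : α → α) (x : α) (n : ℕ) {s : Set α} (hs : MeasurableSet s) :
    orbitMeasure T x n s = #{k ∈ Finset.range n | T^[k] x ∈ s} / n := by
  simp [orbitMeasure, Measure.dirac_apply' _ hs, indicator_apply, ENNReal.div_eq_inv_mul]

open Classical in
lemma orbitMeasure_real_apply (T : α → α) (x : α) (n : ℕ) {s : Set α} (hs : MeasurableSet s) :
    (orbitMeasure T x n).real s = #{k ∈ Finset.range n | T^[k] x ∈ s} / n := by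
  simp [measureReal_def, orbitMeasure_apply T x n hs]

lemma orbitMeasure_eq_one {T : α → α} {s : Set α} (hT : MapsTo T s s) {x : α} (hx : x ∈ s)
    {n : ℕ} (hn : n ≠ 0) (hs : MeasurableSet s) : orbitMeasure T x n s = 1 := by
  classical
  have hmem : ∀ k, T^[k] x ∈ s := fun k => hT.iterate k hx
  simp [orbitMeasure_apply T x n hs, hmem, ENNReal.div_self (Nat.cast_ne_zero.2 hn)]

lemma isProbabilityMeasure_orbitMeasure (T : α → α) (x : α) {n : ℕ} (hn : n ≠ 0) :
    IsProbabilityMeasure (orbitMeasure T x n) :=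
  ⟨orbitMeasure_eq_one (mapsTo_univ T univ) (mem_univ x) hn MeasurableSet.univ⟩

open Classical in
lemma abs_orbitMeasure_real_preimage_sub_le {T : α → α} (hT : Measurable T) (x : α) (n : ℕ)
    {s : Set α} (hs : MeasurableSet s) :
    |(orbitMeasure T x n).real (T ⁻¹' s) - (orbitMeasure T x n).real s| ≤ 1 / n := by
  set f : ℕ → ℝ := fun k => if T^[k] x ∈ s then 1 else 0
  have hshift : ∀ k, (T^[k] x ∈ T ⁻¹' s) ↔ T^[k + 1] x ∈ s := fun k => by
    rw [mem_preimage, ← Function.iterate_succ_apply' T k x]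
  rw [orbitMeasure_real_apply T x n (hT hs), orbitMeasure_real_apply T x n hs, ← sub_div,
    Finset.natCast_card_filter, Finset.natCast_card_filter]
  simp_rw [hshift]
  rw [← Finset.sum_sub_distrib, Finset.sum_range_sub f, abs_div, Nat.abs_cast]
  gcongr
  simp only [f]
  split_ifs <;> norm_num

end OrbitMeasure

namespace MeasureTheory.ProbabilityMeasure

variable {Ω ι : Type*} [MeasurableSpace Ω] [TopologicalSpace Ω] [OpensMeasurableSpace Ω]
  [HasOuterApproxClosed Ω] {L : Filter ι} {μ : ProbabilityMeasure Ω} {ν : ι → ProbabilityMeasure Ω}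

lemma tendsto_measureReal_of_isClopen (hν : Tendsto ν L (𝓝 μ)) {A : Set Ω}
    (hA : IsClopen A) :
    Tendsto (fun i => (ν i : Measure Ω).real A) L (𝓝 ((μ : Measure Ω).real A)) :=
  (ENNReal.tendsto_toReal (measure_ne_top _ _)).comp
    (tendsto_measure_of_null_frontier_of_tendsto' hν (by simp [hA.frontier_eq]))

lemma measure_eq_one_of_tendsto [L.NeBot] (hν : Tendsto ν L (𝓝 μ))
    {F : Set Ω} (hF : IsClosed F) (h : ∀ᶠ i in L, (ν i : Measure Ω) F = 1) :
    (μ : Measure Ω) F = 1 := by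
  refine le_antisymm prob_le_one ?_
  calc (1 : ℝ≥0∞) = L.limsup fun i => (ν i : Measure Ω) F :=
        ((tendsto_congr' h).2 tendsto_const_nhds).limsup_eq.symm
    _ ≤ (μ : Measure Ω) F := limsup_measure_closed_le_of_tendsto hν hF

lemma map_eq_of_tendsto [BorelSpace Ω] [L.NeBot] (hν : Tendsto ν L (𝓝 μ))
    (hgen : ‹MeasurableSpace Ω› = MeasurableSpace.generateFrom {A | IsClopen A})
    {T : Ω → Ω} (hT : Continuous T)
    (hinv : ∀ A, IsClopen A →
      Tendsto (fun i => (ν i : Measure Ω).real (T ⁻¹' A) - (ν i : Measure Ω).real A) L (𝓝 0)) :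
    (μ : Measure Ω).map T = μ := by
  have hTm : Measurable T := hT.measurable
  refine ext_of_generate_finite _ hgen (fun A hA B hB _ => hA.inter hB) (fun A hA => ?_)
    (by simp [Measure.map_apply hTm MeasurableSet.univ])
  have hlim := ((tendsto_measureReal_of_isClopen hν (hA.preimage hT)).sub
    (tendsto_measureReal_of_isClopen hν hA))
  have hreal : (μ : Measure Ω).real (T ⁻¹' A) = (μ : Measure Ω).real A := by
    linarith [tendsto_nhds_unique hlim (hinv A hA)]
  rw [Measure.map_apply hTm hA.isOpen.measurableSet]
  exact (ENNReal.toReal_eq_toReal_iff' (measure_ne_top _ _) (measure_ne_top _ _)).1 hreal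

end MeasureTheory.ProbabilityMeasure

section Shift

variable {Λ : Type*}

lemma iterate_shiftZ_apply (x : ℤ → Λ) (m : ℕ) (i : ℤ) : shiftZ^[m] x i = x (i + m) := by
  induction m generalizing i with
  | zero => simp
  | succ m ih =>
    rw [Function.iterate_succ_apply', shiftZ, ih]
    push_cast
    ring_nf

lemma continuous_shiftZ [TopologicalSpace Λ] : Continuous (shiftZ : (ℤ → Λ) → ℤ → Λ) :=
  continuous_pi fun _ => continuous_apply _

lemma exists_mem_forall_eq_translate {X : Set (ℤ → Λ)} (hX : shiftZ '' X = X) {x : ℤ → Λ}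
    (hx : x ∈ X) (i : ℤ) : ∃ y ∈ X, ∀ j, y j = x (i + j) := by
  obtain ⟨m, rfl | rfl⟩ := Int.eq_nat_or_neg i
  · refine ⟨shiftZ^[m] x, (mapsTo_iff_image_subset.2 hX.le).iterate m hx, fun j => ?_⟩
    rw [iterate_shiftZ_apply, add_comm]
  · obtain ⟨y, hy, rfl⟩ := (show SurjOn shiftZ X X from hX.ge).iterate m hx
    exact ⟨y, hy, fun j => by rw [iterate_shiftZ_apply]; ring_nf⟩

lemma exists_blockAt_zero_eq_of_mem_blocksOf {X : Set (ℤ → Λ)} (hX : shiftZ '' X = X)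
    {B : List Λ} (hB : B ∈ BlocksOf X) : ∃ y ∈ X, blockAt y 0 B.length = B := by
  obtain ⟨-, x, hx, i, hxB⟩ := hB
  obtain ⟨y, hy, hyx⟩ := exists_mem_forall_eq_translate hX hx i
  exact ⟨y, hy, by simpa [blockAt, hyx] using hxB⟩

end Shift

section Cylinders

variable {Λ : Type*}

lemma cyl_ofFn {m : ℕ} (C : Fin m → Λ) :
    cyl (List.ofFn C) = (fun (x : ℤ → Λ) (j : Fin m) => x j) ⁻¹' {C} := by
  ext x
  simp [cyl, funext_iff, Fin.forall_iff]

lemma cyl_eq_iInter (C : List Λ) :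
    cyl C = ⋂ j : Fin C.length, (fun x : ℤ → Λ => x j) ⁻¹' {C.get j} := by
  ext x; simp [cyl]

lemma measurableSet_cyl [MeasurableSpace Λ] [MeasurableSingletonClass Λ] (C : List Λ) :
    MeasurableSet (cyl C) := by
  rw [cyl_eq_iInter]
  exact .iInter fun j => measurable_pi_apply _ (measurableSet_singleton _)

lemma sum_measureReal_cyl_ofFn [Fintype Λ] [MeasurableSpace Λ] [MeasurableSingletonClass Λ]
    (μ : Measure (ℤ → Λ)) [IsProbabilityMeasure μ] (m : ℕ) :
    ∑ C : Fin m → Λ, μ.real (cyl (List.ofFn C)) = 1 := by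
  simp_rw [cyl_ofFn]
  rw [sum_measureReal_preimage_singleton Finset.univ
    (fun C _ => by simpa [cyl_ofFn] using measurableSet_cyl (List.ofFn C))]
  simp

variable [TopologicalSpace Λ] [DiscreteTopology Λ]

lemma isClopen_cyl (C : List Λ) : IsClopen (cyl C) := by
  rw [cyl_eq_iInter]
  exact isClopen_iInter_of_finite fun j => (isClopen_discrete _).preimage (continuous_apply _)

variable [MeasurableSpace Λ] [BorelSpace Λ]

lemma measurableSpace_pi_eq_generateFrom_isClopen {ι : Type*} [Countable ι] [Countable Λ] :
    (inferInstance : MeasurableSpace (ι → Λ)) =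
      MeasurableSpace.generateFrom {A : Set (ι → Λ) | IsClopen A} := by
  refine le_antisymm (iSup_le fun i => ?_)
    (MeasurableSpace.generateFrom_le fun A hA => hA.isOpen.measurableSet)
  rintro _ ⟨t, -, rfl⟩
  exact MeasurableSpace.measurableSet_generateFrom
    ((isClopen_discrete t).preimage (continuous_apply i))

end Cylinders

section Frequency

variable {Λ : Type*} {y : ℤ → Λ} {B C : List Λ}

open Classical in
lemma card_filter_le_card_filter_add (P : ℕ → Prop) (k c : ℕ) :
    #{i ∈ Finset.range k | P i} ≤ #{i ∈ Finset.range k | i + c ≤ k ∧ P i} + c := by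
  set S := (Finset.range k).filter P
  have htail : S.filter (fun i => ¬ i + c ≤ k) ⊆ Finset.Ico (k - c) k := fun i hi => by
    simp only [S, Finset.mem_filter, Finset.mem_range] at hi
    simp only [Finset.mem_Ico]
    omega
  calc #S = #(S.filter (fun i => i + c ≤ k)) + #(S.filter (fun i => ¬ i + c ≤ k)) :=
        (Finset.card_filter_add_card_filter_not _).symm
    _ ≤ #(S.filter (fun i => i + c ≤ k)) + c := by
        gcongr
        exact (Finset.card_le_card htail).trans (by simp only [Nat.card_Ico]; omega)
    _ = _ := by simp only [S, Finset.filter_filter, and_comm]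

open Classical in
lemma freq_eq_card_div (hy : blockAt y 0 B.length = B) (hC : C ≠ []) :
    Freq B C =
      #{i ∈ Finset.range B.length | i + C.length ≤ B.length ∧ shiftZ^[i] y ∈ cyl C} /
        B.length := by
  have hB : ∀ n, n < B.length → B[n]? = some (y n) := fun n hn => by
    rw [← hy]; simp [blockAt, hn]
  have hCpos : 0 < C.length := List.length_pos_iff.2 hC
  rw [Freq, ← Set.ncard_coe_finset]
  congr 3
  ext i
  simp only [Set.mem_ofPred_eq, Finset.coe_filter, Finset.mem_range, cyl, iterate_shiftZ_apply]
  have hyB : ∀ j : Fin C.length, i + C.length ≤ B.length →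
      (B[i + (j : ℕ)]? = C[(j : ℕ)]? ↔ y (j + i) = C.get j) := fun j hle => by
    rw [hB _ (by omega), List.getElem?_eq_getElem j.isLt, Option.some_inj, List.get_eq_getElem,
      Nat.cast_add, add_comm]
  constructor
  · rintro ⟨hle, hmatch⟩
    exact ⟨by omega, hle, fun j => (hyB j hle).1 (hmatch j)⟩
  · rintro ⟨-, hle, hmatch⟩
    exact ⟨hle, fun j => (hyB j hle).2 (hmatch j)⟩

variable [MeasurableSpace Λ] [MeasurableSingletonClass Λ]

lemma freq_le_orbitMeasure_real_cyl (hy : blockAt y 0 B.length = B) (hC : C ≠ []) :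
    Freq B C ≤ (orbitMeasure shiftZ y B.length).real (cyl C) := by
  classical
  rw [freq_eq_card_div hy hC, orbitMeasure_real_apply _ _ _ (measurableSet_cyl C)]
  gcongr
  exact And.right

lemma abs_freq_sub_orbitMeasure_real_cyl_le (hy : blockAt y 0 B.length = B) (hC : C ≠ []) :
    |Freq B C - (orbitMeasure shiftZ y B.length).real (cyl C)| ≤ C.length / B.length := by
  classical
  rw [abs_sub_comm, abs_of_nonneg (sub_nonneg.2 (freq_le_orbitMeasure_real_cyl hy hC)),
    freq_eq_card_div hy hC, orbitMeasure_real_apply _ _ _ (measurableSet_cyl C), ← sub_div]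
  gcongr
  rw [sub_le_iff_le_add']
  exact_mod_cast card_filter_le_card_filter_add _ _ _

end Frequency

lemma sum_abs_sub_le_two {κ : Type*} [Fintype κ] {a b : κ → ℝ} (ha : ∀ k, 0 ≤ a k)
    (hb : ∀ k, 0 ≤ b k) (ha1 : ∑ k, a k ≤ 1) (hb1 : ∑ k, b k ≤ 1) : ∑ k, |a k - b k| ≤ 2 :=
  calc ∑ k, |a k - b k| ≤ ∑ k, (a k + b k) := Finset.sum_le_sum fun k _ =>
        (abs_sub _ _).trans_eq (by rw [abs_of_nonneg (ha k), abs_of_nonneg (hb k)])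
    _ ≤ 2 := by rw [Finset.sum_add_distrib]; linarith

lemma dStar_inl_inr {Λ : Type*} [Fintype Λ] [MeasurableSpace Λ] (B : List Λ)
    (μ : Measure (ℤ → Λ)) :
    dStar (Sum.inl B) (Sum.inr μ) = ∑' l : ℕ, (2 : ℝ) ^ (-(l : ℤ) - 1) *
      ∑ C : Fin (l + 1) → Λ, |Freq B (List.ofFn C) - μ.real (cyl (List.ofFn C))| :=
  rfl

section EmpiricalLimit

variable {Λ : Type*} [Fintype Λ] [TopologicalSpace Λ] [DiscreteTopology Λ]
  [MeasurableSpace Λ] [BorelSpace Λ] {ι : Type*} {L : Filter ι} {y : ι → ℤ → Λ} {k : ι → ℕ}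
  {ν : ι → ProbabilityMeasure (ℤ → Λ)} {μ : ProbabilityMeasure (ℤ → Λ)}

lemma mem_invMeasOf_of_tendsto_orbitMeasure [L.NeBot] {X : Set (ℤ → Λ)} (hX : IsSubshift X)
    (hyX : ∀ i, y i ∈ X) (hk : Tendsto k L atTop)
    (hν : ∀ i, (ν i : Measure (ℤ → Λ)) = orbitMeasure shiftZ (y i) (k i))
    (hνμ : Tendsto ν L (𝓝 μ)) : (μ : Measure (ℤ → Λ)) ∈ InvMeasOf X := by
  obtain ⟨-, hXc, hσX⟩ := hX
  refine ⟨⟨inferInstance, ?_⟩, ?_⟩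
  · refine ProbabilityMeasure.measure_eq_one_of_tendsto hνμ hXc ?_
    filter_upwards [hk.eventually_ne_atTop 0] with i hi
    rw [hν i]
    exact orbitMeasure_eq_one (mapsTo_iff_image_subset.2 hσX.le) (hyX i) hi hXc.measurableSet
  · refine ProbabilityMeasure.map_eq_of_tendsto hνμ measurableSpace_pi_eq_generateFrom_isClopen
      continuous_shiftZ fun A hA => ?_
    refine squeeze_zero_norm (fun i => ?_)
      (tendsto_one_div_atTop_nhds_zero_nat.comp hk)
    rw [Real.norm_eq_abs, hν i]
    exact abs_orbitMeasure_real_preimage_sub_le continuous_shiftZ.measurable _ _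
      hA.isOpen.measurableSet

variable {B : ι → List Λ}

lemma tendsto_freq_of_tendsto_orbitMeasure (hy : ∀ i, blockAt (y i) 0 (B i).length = B i)
    (hlen : Tendsto (fun i => (B i).length) L atTop)
    (hν : ∀ i, (ν i : Measure (ℤ → Λ)) = orbitMeasure shiftZ (y i) (B i).length)
    (hνμ : Tendsto ν L (𝓝 μ)) {C : List Λ} (hC : C ≠ []) :
    Tendsto (fun i => Freq (B i) C) L (𝓝 ((μ : Measure (ℤ → Λ)).real (cyl C))) := by
  have herr : Tendsto (fun i => Freq (B i) C - (ν i : Measure (ℤ → Λ)).real (cyl C)) L (𝓝 0) := by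
    refine squeeze_zero_norm (fun i => ?_)
      ((tendsto_const_div_atTop_nhds_zero_nat (C.length : ℝ)).comp hlen)
    rw [Real.norm_eq_abs, hν i]
    exact abs_freq_sub_orbitMeasure_real_cyl_le (hy i) hC
  simpa using herr.add
    (ProbabilityMeasure.tendsto_measureReal_of_isClopen hνμ (isClopen_cyl C))

theorem tendsto_dStar_of_tendsto_orbitMeasure (hy : ∀ i, blockAt (y i) 0 (B i).length = B i)
    (hlen : Tendsto (fun i => (B i).length) L atTop)
    (hν : ∀ i, (ν i : Measure (ℤ → Λ)) = orbitMeasure shiftZ (y i) (B i).length)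
    (hνμ : Tendsto ν L (𝓝 μ)) :
    Tendsto (fun i => dStar (Sum.inl (B i)) (Sum.inr (μ : Measure (ℤ → Λ)))) L (𝓝 0) := by
  have hfreq : ∀ i {m : ℕ} (C : Fin (m + 1) → Λ),
      Freq (B i) (List.ofFn C) ≤ (ν i : Measure (ℤ → Λ)).real (cyl (List.ofFn C)) :=
    fun i m C => hν i ▸ freq_le_orbitMeasure_real_cyl (hy i) (by simp)
  have hbound : ∀ i (l : ℕ), ‖(2 : ℝ) ^ (-(l : ℤ) - 1) * ∑ C : Fin (l + 1) → Λ,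
      |Freq (B i) (List.ofFn C) - (μ : Measure (ℤ → Λ)).real (cyl (List.ofFn C))|‖ ≤
        (1 / 2 : ℝ) ^ l := fun i l => by
    have hsum := sum_abs_sub_le_two (fun C => by unfold Freq; positivity)
      (fun C => measureReal_nonneg)
      ((Finset.sum_le_sum fun C _ => hfreq i C).trans (sum_measureReal_cyl_ofFn _ (l + 1)).le)
      (sum_measureReal_cyl_ofFn (μ : Measure (ℤ → Λ)) (l + 1)).le
    rw [Real.norm_of_nonneg (by positivity)]
    calc _ ≤ (2 : ℝ) ^ (-(l : ℤ) - 1) * 2 := by gcongr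
      _ = (1 / 2 : ℝ) ^ l := by
        rw [zpow_sub₀ two_ne_zero, zpow_neg, zpow_natCast, zpow_one, one_div_pow]
        field_simp
  have hterm : ∀ l : ℕ, Tendsto (fun i => (2 : ℝ) ^ (-(l : ℤ) - 1) * ∑ C : Fin (l + 1) → Λ,
      |Freq (B i) (List.ofFn C) - (μ : Measure (ℤ → Λ)).real (cyl (List.ofFn C))|) L (𝓝 0) :=
    fun l => by
    have hC : ∀ C : Fin (l + 1) → Λ, Tendsto (fun i => |Freq (B i) (List.ofFn C) -
        (μ : Measure (ℤ → Λ)).real (cyl (List.ofFn C))|) L (𝓝 0) := fun C => by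
      simpa only [sub_self, abs_zero] using ((tendsto_freq_of_tendsto_orbitMeasure hy hlen hν hνμ
        (C := List.ofFn C) (by simp)).sub_const
          ((μ : Measure (ℤ → Λ)).real (cyl (List.ofFn C)))).abs
    simpa only [Finset.sum_const_zero, mul_zero] using
      (tendsto_finsetSum Finset.univ fun C _ => hC C).const_mul ((2 : ℝ) ^ (-(l : ℤ) - 1))
  simpa [dStar_inl_inr] using tendsto_tsum_of_dominated_convergence summable_geometric_two hterm
    (.of_forall (hbound · ·))

end EmpiricalLimit

theorem blocks_close_to_invariant_measures
    {Λ : Type*} [Fintype Λ] [TopologicalSpace Λ] [DiscreteTopology Λ]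
    [MeasurableSpace Λ] [BorelSpace Λ]
    (X : Set (ℤ → Λ)) (hX : IsSubshift X) (ε : ℝ) (hε : 0 < ε) :
    ∃ l₀ : ℕ, ∀ B ∈ BlocksOf X, l₀ ≤ B.length →
      ∃ μ ∈ InvMeasOf X, dStar (Sum.inl B) (Sum.inr μ) < ε := by
  by_contra! hfar
  choose B hBX hBlen hBfar using fun n : ℕ => hfar (n + 1)
  choose y hyX hy using fun n => exists_blockAt_zero_eq_of_mem_blocksOf hX.2.2 (hBX n)
  let ν : ℕ → ProbabilityMeasure (ℤ → Λ) := fun n =>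
    ⟨orbitMeasure shiftZ (y n) (B n).length,
      isProbabilityMeasure_orbitMeasure _ _ (by have := hBlen n; omega)⟩
  let U := Ultrafilter.of (atTop : Filter ℕ)
  -- `ProbabilityMeasure (ℤ → Λ)` is a compact space, so every ultrafilter on it converges.
  have hνμ : Tendsto ν U (𝓝 (U.map ν).lim) := (U.map ν).le_nhds_lim
  have hlen : Tendsto (fun n => (B n).length) U atTop :=
    (tendsto_atTop_mono (fun n => (hBlen n).trans' n.le_succ) tendsto_id).mono_left
      (Ultrafilter.of_le _)
  have hμ := mem_invMeasOf_of_tendsto_orbitMeasure hX hyX hlen (fun _ => rfl) hνμ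
  obtain ⟨n, hn⟩ := ((tendsto_dStar_of_tendsto_orbitMeasure hy hlen (fun _ => rfl) hνμ).eventually
    (gt_mem_nhds hε)).exists
  exact (hBfar n _ hμ).not_gt hn
end

section
/- Let X be a compact metric space, T : X → X a homeomorphism, and D ⊆ X a closed set. Then sup{μ(D) : μ ∈ M_T(X)} ≥ sup{d̄_Ban({i ∈ ℤ : T^i(x) ∈ D}) : x ∈ X}, where M_T(X) is the set of T-invariant Borel probability measures on X. -/
open MeasureTheory

/-- Upper Banach density of a subset of `ℤ`:
`inf_{N ∈ ℕ} sup_{i ∈ ℤ} |A ∩ [i, i+N)| / N`. -/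
noncomputable def ubd (A : Set ℤ) : ℝ :=
  ⨅ N : ℕ+, ⨆ i : ℤ,
    (∑ n ∈ Finset.Ico i (i + (N : ℤ)), Set.indicator A (fun _ => (1 : ℝ)) n) / (N : ℝ)

/-!
Krylov–Bogolyubov along well-chosen windows. Fix `x` and, for each `N`, a window
`[s_N, s_N + N)` on which the orbit of `x` visits `D` with frequency close to the upper Banach
density. The empirical measures of the orbit on these windows live in the compact space of
probability measures, so they have a limit `μ` along an ultrafilter. Shifting a window by one step
changes each average by at most `2‖f‖ / N`, so `μ` is `T`-invariant, and the portmanteau theorem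
for the closed set `D` gives `μ D ≥ limsup μ_N D ≥ ubd`.
-/

open Filter Topology ENNReal BoundedContinuousFunction

theorem Int.sum_Ico_sub {G : Type*} [AddCommGroup G] (g : ℤ → G) (s : ℤ) (N : ℕ) :
    ∑ n ∈ Finset.Ico s (s + N), (g (n + 1) - g n) = g (s + N) - g s := by
  rw [Int.Ico_eq_finset_map, Finset.sum_map, add_sub_cancel_left, Int.toNat_natCast]
  simpa [add_assoc] using Finset.sum_range_sub (fun k : ℕ => g (s + k)) N

theorem tendsto_const_div_pnat_atTop_nhds_zero (C : ℝ) :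
    Tendsto (fun N : ℕ+ => C / N) atTop (𝓝 0) :=
  PNat.tendsto_comp_val_iff.mpr (tendsto_const_div_atTop_nhds_zero_nat C)

section EmpiricalMeasure

variable {X : Type*} [MeasurableSpace X]

noncomputable def empiricalMeasure (p : ℤ → X) (s : ℤ) (N : ℕ+) : ProbabilityMeasure X :=
  ⟨(N : ℝ≥0∞)⁻¹ • ∑ n ∈ Finset.Ico s (s + N), Measure.dirac (p n),
    ⟨by simp [Int.card_Ico, ENNReal.inv_mul_cancel]⟩⟩

variable (p : ℤ → X) (s : ℤ) (N : ℕ+)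

theorem empiricalMeasure_apply {A : Set X} (hA : MeasurableSet A) :
    (empiricalMeasure p s N : Measure X) A =
      (N : ℝ≥0∞)⁻¹ * ∑ n ∈ Finset.Ico s (s + N), (p ⁻¹' A).indicator 1 n := by
  simp only [empiricalMeasure, ProbabilityMeasure.coe_mk, Measure.smul_apply,
    Measure.coe_finsetSum, Finset.sum_apply, Measure.dirac_apply' _ hA, smul_eq_mul]
  rfl

theorem empiricalMeasure_toReal_apply {A : Set X} (hA : MeasurableSet A) :
    ((empiricalMeasure p s N : Measure X) A).toReal =
      (∑ n ∈ Finset.Ico s (s + N), (p ⁻¹' A).indicator (fun _ => (1 : ℝ)) n) / N := by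
  rw [empiricalMeasure_apply p s N hA, ENNReal.toReal_mul, ENNReal.toReal_sum]
  · simp only [ENNReal.toReal_inv, ENNReal.toReal_natCast, div_eq_inv_mul]
    congr 1
    refine Finset.sum_congr rfl fun n _ => ?_
    by_cases hn : n ∈ p ⁻¹' A <;> simp [hn]
  · intro n _
    by_cases hn : n ∈ p ⁻¹' A <;> simp [hn]

theorem integral_empiricalMeasure [MeasurableSingletonClass X] (f : X → ℝ) :
    ∫ x, f x ∂(empiricalMeasure p s N : Measure X) =
      (∑ n ∈ Finset.Ico s (s + N), f (p n)) / N := by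
  rw [empiricalMeasure, ProbabilityMeasure.coe_mk, integral_smul_measure,
    integral_finsetSum_measure]
  · simp [div_eq_inv_mul]
  · exact fun n _ => integrable_dirac enorm_lt_top

theorem abs_integral_comp_sub_integral_empiricalMeasure_le [MeasurableSingletonClass X]
    [TopologicalSpace X] {T : X → X} (hp : ∀ n, p (n + 1) = T (p n)) (f : X →ᵇ ℝ) :
    |∫ x, f (T x) ∂(empiricalMeasure p s N : Measure X) -
        ∫ x, f x ∂(empiricalMeasure p s N : Measure X)| ≤ 2 * ‖f‖ / N := by
  rw [integral_empiricalMeasure, integral_empiricalMeasure, ← sub_div, ← Finset.sum_sub_distrib]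
  simp_rw [← hp]
  rw [Int.sum_Ico_sub (fun n => f (p n)), abs_div, Nat.abs_cast]
  gcongr
  exact f.dist_le_two_norm _ _

end EmpiricalMeasure

theorem map_eq_of_tendsto_empiricalMeasure {X : Type*} [MetricSpace X] [MeasurableSpace X]
    [BorelSpace X] {T : X → X} (hT : Continuous T) {p : ℤ → X} (hp : ∀ n, p (n + 1) = T (p n))
    {L : Filter ℕ+} [L.NeBot] (hL : L ≤ atTop) (s : ℕ+ → ℤ) {μ : ProbabilityMeasure X}
    (hμ : Tendsto (fun N => empiricalMeasure p (s N) N) L (𝓝 μ)) :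
    (μ : Measure X).map T = μ := by
  refine ext_of_forall_integral_eq_of_IsFiniteMeasure fun f => ?_
  rw [integral_map hT.aemeasurable f.continuous.aestronglyMeasurable]
  have hfT := ProbabilityMeasure.tendsto_iff_forall_integral_tendsto.1 hμ
    (f.compContinuous ⟨T, hT⟩)
  have hf := ProbabilityMeasure.tendsto_iff_forall_integral_tendsto.1 hμ f
  have herr : Tendsto (fun N => ∫ x, f (T x) ∂(empiricalMeasure p (s N) N : Measure X) -
      ∫ x, f x ∂(empiricalMeasure p (s N) N : Measure X)) L (𝓝 0) :=
    squeeze_zero_norm (fun N => abs_integral_comp_sub_integral_empiricalMeasure_le p _ N hp f)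
      ((tendsto_const_div_pnat_atTop_nhds_zero _).mono_left hL)
  exact tendsto_nhds_unique hfT (by simpa using hf.add herr)

theorem ProbabilityMeasure.le_toReal_apply_of_tendsto {Ω ι : Type*} [MeasurableSpace Ω]
    [TopologicalSpace Ω] [OpensMeasurableSpace Ω] [HasOuterApproxClosed Ω]
    {L : Filter ι} [L.NeBot]
    {μs : ι → ProbabilityMeasure Ω} {μ : ProbabilityMeasure Ω} (hμ : Tendsto μs L (𝓝 μ))
    {F : Set Ω} (hF : IsClosed F) {a : ι → ℝ} {c : ℝ} (ha : Tendsto a L (𝓝 c))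
    (hle : ∀ i, a i ≤ ((μs i : Measure Ω) F).toReal) :
    c ≤ ((μ : Measure Ω) F).toReal := by
  refine (ENNReal.ofReal_le_iff_le_toReal (measure_ne_top _ _)).1 ?_
  calc ENNReal.ofReal c = L.limsup fun i => ENNReal.ofReal (a i) :=
        ((ENNReal.tendsto_ofReal ha).limsup_eq).symm
    _ ≤ L.limsup fun i => (μs i : Measure Ω) F :=
        limsup_le_limsup (Eventually.of_forall fun i =>
          ENNReal.ofReal_le_of_le_toReal (hle i))
    _ ≤ (μ : Measure Ω) F := ProbabilityMeasure.limsup_measure_closed_le_of_tendsto hμ hF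

theorem exists_window_density_gt_ubd_sub_inv (A : Set ℤ) (N : ℕ+) :
    ∃ s : ℤ, ubd A - 1 / N <
      (∑ n ∈ Finset.Ico s (s + (N : ℤ)), A.indicator (fun _ => (1 : ℝ)) n) / N := by
  have hbdd : BddBelow (Set.range fun N : ℕ+ => ⨆ i : ℤ,
      (∑ n ∈ Finset.Ico i (i + (N : ℤ)), A.indicator (fun _ => (1 : ℝ)) n) / (N : ℝ)) := by
    refine ⟨0, ?_⟩
    rintro _ ⟨N, rfl⟩
    exact Real.iSup_nonneg fun i => div_nonneg
      (Finset.sum_nonneg fun n _ => Set.indicator_nonneg (fun _ _ => zero_le_one) n)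
      N.val.cast_nonneg
  refine exists_lt_of_lt_ciSup (lt_of_lt_of_le ?_ (ciInf_le hbdd N))
  have : (0 : ℝ) < 1 / N := by positivity
  unfold ubd
  linarith

theorem exists_invariant_probabilityMeasure_ubd_le {X : Type*} [MetricSpace X] [CompactSpace X]
    [MeasurableSpace X] [BorelSpace X] {T : X → X} (hT : Continuous T) (p : ℤ → X)
    (hp : ∀ n, p (n + 1) = T (p n)) {D : Set X} (hD : IsClosed D) :
    ∃ μ : ProbabilityMeasure X, (μ : Measure X).map T = μ ∧
      ubd (p ⁻¹' D) ≤ ((μ : Measure X) D).toReal := by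
  choose s hs using exists_window_density_gt_ubd_sub_inv (p ⁻¹' D)
  let U : Ultrafilter ℕ+ := .of atTop
  let ν : ℕ+ → ProbabilityMeasure X := fun N => empiricalMeasure p (s N) N
  have hν : Tendsto ν U (𝓝 (U.map ν).lim) := (U.map ν).le_nhds_lim
  refine ⟨_, map_eq_of_tendsto_empiricalMeasure hT hp (Ultrafilter.of_le _) s hν, ?_⟩
  have hslack : Tendsto (fun N : ℕ+ => ubd (p ⁻¹' D) - 1 / N) U (𝓝 (ubd (p ⁻¹' D))) := by
    simpa using ((tendsto_const_div_pnat_atTop_nhds_zero 1).const_sub _).mono_left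
      (Ultrafilter.of_le atTop)
  refine ProbabilityMeasure.le_toReal_apply_of_tendsto hν hD hslack fun N => ?_
  rw [empiricalMeasure_toReal_apply p _ N hD.measurableSet]
  exact (hs N).le

/-- For a homeomorphism `T` of a compact metric space and a closed set `D`, the supremum
of `μ(D)` over `T`-invariant Borel probability measures dominates the supremum over `x`
of the upper Banach density of the set of times the orbit of `x` visits `D`. -/
theorem sup_invMeasure_ge_sup_ubd_visits
    {X : Type*} [MetricSpace X] [CompactSpace X] [MeasurableSpace X] [BorelSpace X]
    (T : X ≃ₜ X) (D : Set X) (hD : IsClosed D) :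
    ⨆ x : X, ubd {i : ℤ | (T.toEquiv ^ i) x ∈ D} ≤
      ⨆ μ : {μ : Measure X //
        IsProbabilityMeasure μ ∧ Measure.map (T : X → X) μ = μ}, (μ.1 D).toReal := by
  have hbdd : BddAbove (Set.range fun μ : {μ : Measure X //
      IsProbabilityMeasure μ ∧ Measure.map (T : X → X) μ = μ} => (μ.1 D).toReal) := by
    refine ⟨1, ?_⟩
    rintro _ ⟨⟨μ, hμ, -⟩, rfl⟩
    exact ENNReal.toReal_le_of_le_ofReal zero_le_one (by simpa using prob_le_one)
  refine Real.iSup_le (fun x => ?_) (Real.iSup_nonneg fun _ => ENNReal.toReal_nonneg)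
  have horbit (n : ℤ) : (T.toEquiv ^ (n + 1)) x = T ((T.toEquiv ^ n) x) := by
    rw [add_comm, zpow_one_add]
    rfl
  obtain ⟨μ, hμT, hμD⟩ :=
    exists_invariant_probabilityMeasure_ubd_le T.continuous (fun n => (T.toEquiv ^ n) x) horbit hD
  exact hμD.trans (le_ciSup hbdd ⟨μ, inferInstance, hμT⟩)
end

section
/- Let M be a compact, convex subset of a locally convex metrizable topological real vector space V, and let d* be a convex metric on V compatible with its topology. Let μ₀ be an extreme point of M. For every ε > 0 there exists γ > 0 such that for every Borel probability measure ξ on M with barycenter μ (i.e., φ(μ) = ∫_M φ(ν) dξ(ν) for every continuous linear functional φ on V), the implication holds: d*(μ, μ₀) < γ ⟹ ξ(M \ Ball(μ₀, ε)) < ε. -/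
/-!
Let `K = M \ Ball(μ₀, ε)` and `C = closure (convexHull K)`. Balls of a convex metric are convex,
so Milman's argument (cover `K` by finitely many small closed balls intersected with `C`, whose
convex hull is compact and hence all of `C`) shows that the extreme points of `C` lie in `K`;
thus `μ₀ ∉ C`. If `ξ` gives mass `t ≥ ε` to `K`, the barycenters `a ∈ C`, `b ∈ M` of the two
normalised pieces of `ξ` on `K` and on its complement satisfy `μ = t • a + (1 - t) • b`.
Since `μ₀` is extreme in `M`, it misses the compact set of all such combinations with `t ≥ ε`,
and `γ` is the distance from `μ₀` to that set.
-/

open MeasureTheory Set Topology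

structure IsCompatibleMetric {X : Type*} [TopologicalSpace X] (d : X → X → ℝ) : Prop where
  eq_zero_iff : ∀ a b, d a b = 0 ↔ a = b
  symm : ∀ a b, d a b = d b a
  triangle : ∀ a b c, d a c ≤ d a b + d b c
  mem_nhds_iff : ∀ (x : X) (s : Set X), s ∈ 𝓝 x ↔ ∃ ε > 0, {y | d x y < ε} ⊆ s

def IsConvexMetric {V : Type*} [AddCommGroup V] [Module ℝ V] (d : V → V → ℝ) : Prop :=
  ∀ (a a' b b' : V) (t : ℝ), 0 ≤ t → t ≤ 1 →
    d (t • a + (1 - t) • b) (t • a' + (1 - t) • b') ≤ t * d a a' + (1 - t) * d b b'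

namespace IsCompatibleMetric

variable {X : Type*} [TopologicalSpace X] {d : X → X → ℝ}

theorem nonneg (hd : IsCompatibleMetric d) (a b : X) : 0 ≤ d a b := by
  have h := hd.triangle a b a
  rw [(hd.eq_zero_iff a a).2 rfl, hd.symm b a] at h
  linarith

theorem pos_of_ne (hd : IsCompatibleMetric d) {a b : X} (h : a ≠ b) : 0 < d a b :=
  (hd.nonneg a b).lt_of_ne' (mt (hd.eq_zero_iff a b).1 h)

theorem ball_mem_nhds (hd : IsCompatibleMetric d) (x : X) {r : ℝ} (hr : 0 < r) :
    {y | d x y < r} ∈ 𝓝 x :=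
  (hd.mem_nhds_iff x _).2 ⟨r, hr, subset_rfl⟩

theorem continuous_right (hd : IsCompatibleMetric d) (x : X) : Continuous (d x) := by
  refine continuous_iff_continuousAt.2 fun y₀ => Metric.tendsto_nhds.2 fun δ hδ => ?_
  filter_upwards [hd.ball_mem_nhds y₀ hδ] with y (hy : d y₀ y < δ)
  rw [Real.dist_eq, abs_sub_lt_iff]
  have := hd.triangle x y₀ y
  have := hd.triangle x y y₀
  have := hd.symm y y₀
  constructor <;> linarith

theorem continuous_left (hd : IsCompatibleMetric d) (x : X) : Continuous (d · x) :=
  (hd.continuous_right x).congr fun y => hd.symm x y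

theorem t1Space (hd : IsCompatibleMetric d) : T1Space X :=
  t1Space_iff_exists_open.2 fun x y hxy =>
    ⟨{z | d x z < d x y}, isOpen_lt (hd.continuous_right x) continuous_const,
      by simpa [(hd.eq_zero_iff x x).2 rfl] using hd.pos_of_ne hxy, lt_irrefl (d x y)⟩

theorem exists_pos_le_of_notMem (hd : IsCompatibleMetric d) {S : Set X} (hS : IsCompact S)
    {x : X} (hx : x ∉ S) : ∃ γ > 0, ∀ y ∈ S, γ ≤ d y x :=
  hS.exists_forall_le' (hd.continuous_left x).continuousOn fun _ hy =>
    hd.pos_of_ne (ne_of_mem_of_not_mem hy hx)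

end IsCompatibleMetric

section Convexity

variable {V : Type*} [AddCommGroup V] [Module ℝ V]

theorem IsConvexMetric.convex_closedBall {d : V → V → ℝ} (hd : IsConvexMetric d) (x : V)
    (r : ℝ) : Convex ℝ {y | d x y ≤ r} := by
  intro a (ha : d x a ≤ r) b (hb : d x b ≤ r) s t hs ht hst
  obtain rfl : t = 1 - s := by linarith
  have h := hd x a x b s hs (by linarith)
  rw [Convex.combo_self hst] at h
  show _ ≤ r
  nlinarith

theorem eq_of_smul_add_smul_eq_of_mem_extremePoints {M : Set V} {x a b : V} {t : ℝ}
    (hx : x ∈ M.extremePoints ℝ) (ha : a ∈ M) (hb : b ∈ M) (ht₀ : 0 < t) (ht₁ : t ≤ 1)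
    (h : t • a + (1 - t) • b = x) : a = x := by
  rcases ht₁.eq_or_lt with rfl | ht₁
  · simpa using h
  · exact (mem_extremePoints_iff_left.1 hx).2 a ha b hb ⟨t, 1 - t, ht₀, by linarith, by ring, h⟩

variable [TopologicalSpace V] [IsTopologicalAddGroup V] [ContinuousSMul ℝ V]

theorem isCompact_convexJoin {s t : Set V} (hs : IsCompact s) (ht : IsCompact t) :
    IsCompact (convexJoin ℝ s t) := by
  have h : convexJoin ℝ s t =
      (fun p : V × V × ℝ => AffineMap.lineMap p.1 p.2.1 p.2.2) '' (s ×ˢ t ×ˢ Icc 0 1) := by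
    ext
    simp only [mem_convexJoin, segment_eq_image_lineMap, mem_image, mem_prod]
    aesop
  rw [h]
  exact (hs.prod (ht.prod isCompact_Icc)).image (by fun_prop)

theorem isCompact_convexHull_union {s t : Set V} (hs : IsCompact (convexHull ℝ s))
    (ht : IsCompact (convexHull ℝ t)) : IsCompact (convexHull ℝ (s ∪ t)) := by
  rcases s.eq_empty_or_nonempty with rfl | hs'
  · simpa using ht
  rcases t.eq_empty_or_nonempty with rfl | ht'
  · simpa using hs
  rw [convexHull_union hs' ht']
  exact isCompact_convexJoin hs ht

theorem isCompact_convexHull_biUnion {ι : Type*} (t : Finset ι) {K : ι → Set V}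
    (hK : ∀ i ∈ t, IsCompact (convexHull ℝ (K i))) :
    IsCompact (convexHull ℝ (⋃ i ∈ t, K i)) := by
  classical
  induction t using Finset.induction_on with
  | empty => simp
  | insert a t _ ih =>
    rw [Finset.set_biUnion_insert]
    exact isCompact_convexHull_union (hK a (by simp)) (ih fun i hi => hK i (by simp [hi]))

theorem IsCompatibleMetric.extremePoints_closure_convexHull_subset {d : V → V → ℝ}
    (hd : IsCompatibleMetric d) (hconv : IsConvexMetric d) {K : Set V} (hK : IsCompact K)
    (hC : IsCompact (closure (convexHull ℝ K))) :
    (closure (convexHull ℝ K)).extremePoints ℝ ⊆ K := by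
  have := hd.t1Space
  intro x hx
  by_contra hxK
  obtain ⟨r, hr, hrK⟩ := hd.exists_pos_le_of_notMem hK hxK
  obtain ⟨t, htK, hcover⟩ := hK.elim_nhds_subcover (fun i => {y | d i y < r / 2})
    fun i _ => hd.ball_mem_nhds i (half_pos hr)
  set C := closure (convexHull ℝ K)
  set P : V → Set V := fun i => C ∩ {y | d i y ≤ r / 2}
  have hP : ∀ i, IsCompact (convexHull ℝ (P i)) := fun i => by
    rw [((convex_convexHull ℝ K).closure.inter (hconv.convex_closedBall i _)).convexHull_eq]
    exact hC.inter_right (isClosed_le (hd.continuous_right i) continuous_const)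
  have hKP : K ⊆ ⋃ i ∈ t, P i := fun y hy => by
    obtain ⟨i, hi, hyi : d i y < r / 2⟩ := mem_iUnion₂.1 (hcover hy)
    exact mem_biUnion hi ⟨subset_closure (subset_convexHull ℝ K hy), show d i y ≤ r / 2 from hyi.le⟩
  have hCeq : convexHull ℝ (⋃ i ∈ t, P i) = C :=
    (convexHull_min (iUnion₂_subset fun i _ => inter_subset_left)
      (convex_convexHull ℝ K).closure).antisymm
      (closure_minimal (convexHull_mono hKP)
        (isCompact_convexHull_biUnion t fun i _ => hP i).isClosed)
  rw [← hCeq] at hx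
  obtain ⟨i, hi, -, hxi⟩ := mem_iUnion₂.1 (extremePoints_convexHull_subset hx)
  linarith [hrK i (htK i hi), show d i x ≤ r / 2 from hxi]

theorem IsCompatibleMetric.exists_pos_le_smul_add_smul {d : V → V → ℝ}
    (hd : IsCompatibleMetric d) {C M : Set V} (hC : IsCompact C) (hM : IsCompact M) (hCM : C ⊆ M)
    {x : V} (hx : x ∈ M.extremePoints ℝ) (hxC : x ∉ C) {ε : ℝ} (hε : 0 < ε) :
    ∃ γ > 0, ∀ t ∈ Icc ε 1, ∀ a ∈ C, ∀ b ∈ M, γ ≤ d (t • a + (1 - t) • b) x := by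
  obtain ⟨γ, hγ, hγS⟩ := hd.exists_pos_le_of_notMem
    ((isCompact_Icc.prod (hC.prod hM)).image
      (by fun_prop : Continuous fun p : ℝ × V × V => p.1 • p.2.1 + (1 - p.1) • p.2.2))
    (by
      rintro ⟨⟨t, a, b⟩, ⟨⟨htε, ht₁⟩, ha, hb⟩, h⟩
      exact hxC (eq_of_smul_add_smul_eq_of_mem_extremePoints hx (hCM ha) hb
        (hε.trans_le htε) ht₁ h ▸ ha))
  exact ⟨γ, hγ, fun t ht a ha b hb => hγS _ ⟨(t, a, b), ⟨ht, ha, hb⟩, rfl⟩⟩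

end Convexity

theorem Continuous.integrable_of_ae_mem_isCompact {X E : Type*} [TopologicalSpace X]
    [MeasurableSpace X] [OpensMeasurableSpace X] [NormedAddCommGroup E]
    [SecondCountableTopology E] {f : X → E} (hf : Continuous f) {M : Set X} (hM : IsCompact M)
    {ρ : Measure X} [IsFiniteMeasure ρ] (hρM : ∀ᵐ x ∂ρ, x ∈ M) : Integrable f ρ := by
  obtain ⟨C, hC⟩ := (hM.image hf).isBounded.exists_norm_le
  exact .of_bound hf.aestronglyMeasurable C (hρM.mono fun x hx => hC _ (mem_image_of_mem f hx))

section Barycenter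

variable {V : Type*} [AddCommGroup V] [Module ℝ V] [TopologicalSpace V]
  [MeasurableSpace V] [OpensMeasurableSpace V]

theorem IsCompact.average_mem_image {E : Type*} [NormedAddCommGroup E] [NormedSpace ℝ E]
    [FiniteDimensional ℝ E] (T : V →L[ℝ] E) {D : Set V} (hD : IsCompact D) (hDconv : Convex ℝ D)
    {ρ : Measure V} [IsFiniteMeasure ρ] [NeZero ρ] (hρD : ∀ᵐ x ∂ρ, x ∈ D) :
    ⨍ x, T x ∂ρ ∈ T '' D :=
  (hDconv.linear_image (T : V →ₗ[ℝ] E)).average_mem (hD.image T.continuous).isClosed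
    (hρD.mono fun _ => mem_image_of_mem T) (T.continuous.integrable_of_ae_mem_isCompact hD hρD)

theorem IsCompact.exists_mem_forall_integral_eq_mul {D : Set V} (hD : IsCompact D)
    (hDconv : Convex ℝ D) (hDne : D.Nonempty) (ρ : Measure V) [IsFiniteMeasure ρ]
    (hρD : ∀ᵐ x ∂ρ, x ∈ D) : ∃ a ∈ D, ∀ φ : V →L[ℝ] ℝ, ∫ x, φ x ∂ρ = ρ.real univ * φ a := by
  rcases eq_zero_or_neZero ρ with rfl | hρ
  · obtain ⟨a, ha⟩ := hDne
    exact ⟨a, ha, fun φ => by simp⟩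
  suffices h : (D ∩ ⋂ φ : V →L[ℝ] ℝ, {a | φ a = ⨍ x, φ x ∂ρ}).Nonempty by
    obtain ⟨a, haD, ha⟩ := h
    refine ⟨a, haD, fun φ => ?_⟩
    rw [mem_iInter.1 ha φ, average_eq, smul_eq_mul,
      mul_inv_cancel_left₀ (measureReal_univ_ne_zero (μ := ρ))]
  refine hD.inter_iInter_nonempty _ (fun φ => isClosed_eq φ.continuous continuous_const) fun u => ?_
  -- the finitely many functionals in `u` map `D` into a finite-dimensional space
  let T : V →L[ℝ] (u → ℝ) := .pi fun φ => φ.1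
  obtain ⟨a, haD, ha⟩ := hD.average_mem_image T hDconv hρD
  refine ⟨a, haD, mem_iInter₂.2 fun φ hφ => ?_⟩
  have hT := T.continuous.integrable_of_ae_mem_isCompact hD hρD
  calc φ a = T a ⟨φ, hφ⟩ := rfl
    _ = ⨍ x, φ x ∂ρ := by
      rw [ha, average_eq, average_eq, Pi.smul_apply]
      congr 1
      exact ((ContinuousLinearMap.proj (R := ℝ) ⟨φ, hφ⟩).integral_comp_comm hT).symm

theorem exists_eq_measureReal_smul_add_smul [SeparatingDual ℝ V] {ξ : Measure V}
    [IsProbabilityMeasure ξ] {μ : V} (hμ : ∀ φ : V →L[ℝ] ℝ, φ μ = ∫ x, φ x ∂ξ) {K C M : Set V}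
    (hK : MeasurableSet K) (hKC : K ⊆ C) (hC : IsCompact C) (hCconv : Convex ℝ C)
    (hCne : C.Nonempty) (hM : IsCompact M) (hMconv : Convex ℝ M) (hξM : ∀ᵐ x ∂ξ, x ∈ M) :
    ∃ a ∈ C, ∃ b ∈ M, μ = ξ.real K • a + (1 - ξ.real K) • b := by
  obtain ⟨a, haC, ha⟩ := hC.exists_mem_forall_integral_eq_mul hCconv hCne (ξ.restrict K)
    ((ae_restrict_mem hK).mono fun _ hx => hKC hx)
  obtain ⟨b, hbM, hb⟩ := hM.exists_mem_forall_integral_eq_mul hMconv hξM.exists (ξ.restrict Kᶜ)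
    (ae_restrict_of_ae hξM)
  refine ⟨a, haC, b, hbM, (SeparatingDual.eq_iff_forall_dual_eq (R := ℝ)).2 fun φ => ?_⟩
  rw [hμ, ← integral_add_compl hK (φ.continuous.integrable_of_ae_mem_isCompact hM hξM), ha, hb,
    measureReal_restrict_apply_univ, measureReal_restrict_apply_univ, probReal_compl_eq_one_sub hK]
  simp

end Barycenter

theorem barycenter_mass_near_extreme_point
    {V : Type*} [AddCommGroup V] [Module ℝ V] [TopologicalSpace V]
    [IsTopologicalAddGroup V] [ContinuousSMul ℝ V] [LocallyConvexSpace ℝ V]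
    [MeasurableSpace V] [BorelSpace V]
    (d : V → V → ℝ)
    (hd_eq : ∀ a b : V, d a b = 0 ↔ a = b)
    (hd_symm : ∀ a b : V, d a b = d b a)
    (hd_tri : ∀ a b c : V, d a c ≤ d a b + d b c)
    (hd_top : ∀ (x : V) (s : Set V), s ∈ nhds x ↔ ∃ ε > 0, {y : V | d x y < ε} ⊆ s)
    (hd_convex : ∀ (a a' b b' : V) (t : ℝ), 0 ≤ t → t ≤ 1 →
      d (t • a + (1 - t) • b) (t • a' + (1 - t) • b') ≤ t * d a a' + (1 - t) * d b b')
    (M : Set V) (hMcomp : IsCompact M) (hMconv : Convex ℝ M)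
    (μ₀ : V) (hμ₀ : μ₀ ∈ Set.extremePoints ℝ M)
    (ε : ℝ) (hε : 0 < ε) :
    ∃ γ > 0, ∀ (ξ : Measure V) (μ : V),
      IsProbabilityMeasure ξ → ξ M = 1 →
      (∀ φ : V →L[ℝ] ℝ, φ μ = ∫ ν, φ ν ∂ξ) →
      d μ μ₀ < γ → (ξ (M \ {ν : V | d ν μ₀ < ε})).toReal < ε := by
  have hd : IsCompatibleMetric d := ⟨hd_eq, hd_symm, hd_tri, hd_top⟩
  have := hd.t1Space
  set K := M \ {ν | d ν μ₀ < ε}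
  have hK : IsCompact K := hMcomp.diff (isOpen_lt (hd.continuous_left μ₀) continuous_const)
  set C := closure (convexHull ℝ K)
  have hKC : K ⊆ C := (subset_convexHull ℝ K).trans subset_closure
  have hCM : C ⊆ M := closure_minimal (convexHull_min sdiff_subset hMconv) hMcomp.isClosed
  have hC : IsCompact C := hMcomp.of_isClosed_subset isClosed_closure hCM
  have hμ₀C : μ₀ ∉ C := fun h =>
    (hd.extremePoints_closure_convexHull_subset hd_convex hK hC
      (inter_extremePoints_subset_extremePoints_of_subset hCM ⟨h, hμ₀⟩)).2
      (by simpa [(hd_eq μ₀ μ₀).2 rfl] using hε)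
  obtain ⟨γ, hγ, hγS⟩ := hd.exists_pos_le_smul_add_smul hC hMcomp hCM hμ₀ hμ₀C hε
  refine ⟨γ, hγ, fun ξ μ _ hξM hμ hdμ => ?_⟩
  by_contra! hKε
  have hCne : C.Nonempty := (nonempty_of_measure_ne_zero fun h => by
    rw [h, ENNReal.toReal_zero] at hKε; linarith).mono hKC
  obtain ⟨a, ha, b, hb, rfl⟩ := exists_eq_measureReal_smul_add_smul hμ hK.isClosed.measurableSet
    hKC hC (convex_convexHull ℝ K).closure hCne hMcomp hMconv
    ((ae_mem_iff_measure_eq hMcomp.isClosed.nullMeasurableSet).2 (by rw [hξM, measure_univ]))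
  exact (hγS _ ⟨hKε, measureReal_le_one⟩ a ha b hb).not_gt hdμ
end

section
/- Let M be a compact, convex subset of a locally convex metrizable topological real vector space V, and let d* be a convex metric on V compatible with its topology. Assume the set ex(M) of extreme points of M is closed. Then for every ε > 0 there exists γ > 0 such that for every pair (μ, μ₀), where μ₀ ∈ ex(M) and μ is the barycenter of some Borel probability measure ξ on M (i.e., φ(μ) = ∫_M φ(ν) dξ(ν) for every continuous linear functional φ on V), the implication holds: d*(μ, μ₀) < γ ⟹ ξ(M \ Ball(μ₀, ε)) < ε. -/
/-!
If `ξ` gives mass `t ≥ ε` to `K = M \ ball m ε`, separating with continuous functionals writes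
its barycenter as `t • x + (1 - t) • y` with `x` in the closed convex hull of `K` and `y ∈ M`.
For counterexamples with `dist μ m → 0`, compactness of `[ε, 1] × M × M × ex M` yields a limit
`t₀ • x₀ + (1 - t₀) • y₀ = m₀` with `m₀` extreme and `t₀ > 0`, hence `x₀ = m₀`; but `x₀` lies in
the closed convex hull of `M \ ball m₀ (ε / 2)`, which by Milman's lemma avoids `m₀`: that hull is
contained in the compact convex hull of finitely many small convex pieces of `M` missing `m₀`,
whose extreme points lie in those pieces.
-/

open MeasureTheory Set Filter Topology Pointwise Metric

theorem eq_of_smul_add_smul_mem_extremePoints {𝕜 E : Type*} [Ring 𝕜] [PartialOrder 𝕜]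
    [IsOrderedRing 𝕜] [AddCommGroup E] [Module 𝕜 E] {A : Set E} {x y z : E}
    (hz : z ∈ A.extremePoints 𝕜) (hx : x ∈ A) (hy : y ∈ A) {t : 𝕜} (ht₀ : 0 < t) (ht₁ : t ≤ 1)
    (h : t • x + (1 - t) • y = z) : x = z := by
  rcases ht₁.lt_or_eq with ht₁ | rfl
  · exact hz.2 hx hy ⟨t, 1 - t, ht₀, sub_pos.2 ht₁, add_sub_cancel t 1, h⟩
  · simpa using h

section LocallyConvex

variable {E : Type*} [AddCommGroup E] [Module ℝ E] [TopologicalSpace E]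

theorem IsCompact.convexJoin [ContinuousAdd E] [ContinuousSMul ℝ E] {s t : Set E}
    (hs : IsCompact s) (ht : IsCompact t) : IsCompact (_root_.convexJoin ℝ s t) := by
  have : _root_.convexJoin ℝ s t =
      (fun p : E × E × ℝ => (1 - p.2.2) • p.1 + p.2.2 • p.2.1) '' (s ×ˢ t ×ˢ Icc 0 1) := by
    ext z
    simp only [mem_convexJoin, segment_eq_image, mem_image, Prod.exists, mem_prod]
    aesop
  rw [this]
  exact (hs.prod (ht.prod isCompact_Icc)).image (by fun_prop)

theorem Finset.isCompact_convexHull_biUnion [ContinuousAdd E] [ContinuousSMul ℝ E] {ι : Type*}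
    (F : Finset ι) {C : ι → Set E} (hC : ∀ i ∈ F, IsCompact (C i))
    (hCc : ∀ i ∈ F, Convex ℝ (C i)) : IsCompact (convexHull ℝ (⋃ i ∈ F, C i)) := by
  classical
  induction F using Finset.induction_on with
  | empty => simp
  | insert a F _ ih =>
    have hD := ih (fun i hi => hC i (mem_insert_of_mem hi))
      (fun i hi => hCc i (mem_insert_of_mem hi))
    have hCa := hC a (mem_insert_self a F)
    have hCac := hCc a (mem_insert_self a F)
    rw [Finset.set_biUnion_insert]
    rcases (⋃ i ∈ F, C i).eq_empty_or_nonempty with h' | h'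
    · rwa [h', Set.union_empty, hCac.convexHull_eq]
    rcases (C a).eq_empty_or_nonempty with h | h
    · rwa [h, Set.empty_union]
    rw [← convexHull_convexHull_union_right,
      hCac.convexHull_union (convex_convexHull ℝ _) h h'.convexHull]
    exact hCa.convexJoin hD

variable [IsTopologicalAddGroup E] [ContinuousSMul ℝ E] [LocallyConvexSpace ℝ E]

theorem notMem_closure_convexHull_diff_of_mem_extremePoints [T2Space E] {M U : Set E}
    (hM : IsCompact M) (hMc : Convex ℝ M) {x : E} (hx : x ∈ M.extremePoints ℝ) (hU : U ∈ 𝓝 x) :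
    x ∉ closure (convexHull ℝ (M \ U)) := by
  have hsep : ∀ p, p ≠ x → ∃ W, IsOpen W ∧ Convex ℝ W ∧ p ∈ W ∧ x ∉ closure W := by
    intro p hp
    obtain ⟨W, W', hW, hW', hWc, -, hpW, hxW', hdisj⟩ :=
      exists_open_convex_of_notMem (𝕜 := ℝ) (mem_singleton_iff.not.2 hp) (convex_singleton x)
        isClosed_singleton
    exact ⟨W, hW, hWc, hpW, fun h => (hdisj.closure_left hW').notMem_of_mem_left h (hxW' rfl)⟩
  choose! W hWo hWc hpW hxW using hsep
  have hne : ∀ p ∈ M \ interior U, p ≠ x := fun p hp h =>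
    hp.2 (h ▸ mem_interior_iff_mem_nhds.2 hU)
  obtain ⟨F, hFK, hcover⟩ := (hM.diff isOpen_interior).elim_nhds_subcover W
    fun p hp => (hWo p (hne p hp)).mem_nhds (hpW p (hne p hp))
  set D := convexHull ℝ (⋃ p ∈ F, M ∩ closure (W p))
  have hD : IsCompact D := F.isCompact_convexHull_biUnion
    (fun p _ => hM.inter_right isClosed_closure) fun p hp =>
      hMc.inter (hWc p (hne p (hFK p hp))).closure
  have hUD : closure (convexHull ℝ (M \ U)) ⊆ D :=
    closure_minimal (convexHull_mono fun q hq => by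
      obtain ⟨p, hp, hqp⟩ := mem_iUnion₂.1 (hcover ⟨hq.1, fun h => hq.2 (interior_subset h)⟩)
      exact mem_iUnion₂.2 ⟨p, hp, hq.1, subset_closure hqp⟩) hD.isClosed
  have hDM : D ⊆ M := convexHull_min (iUnion₂_subset fun p _ => inter_subset_left) hMc
  intro hxU
  obtain ⟨p, hp, -, hxp⟩ := mem_iUnion₂.1 <| extremePoints_convexHull_subset <|
    inter_extremePoints_subset_extremePoints_of_subset hDM ⟨hUD hxU, hx⟩
  exact hxW p (hne p (hFK p hp)) hxp

theorem IsClosed.mem_of_forall_exists_clm_le {C : Set E} (hC : IsClosed C) (hCc : Convex ℝ C)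
    {x : E} (h : ∀ f : E →L[ℝ] ℝ, ∃ c ∈ C, f c ≤ f x) : x ∈ C := by
  by_contra hx
  obtain ⟨f, u, hfx, hfC⟩ := geometric_hahn_banach_point_closed hCc hC hx
  obtain ⟨c, hc, hfc⟩ := h f
  linarith [hfC c hc]

theorem mem_smul_add_smul_of_forall_clm_eq_integral [T2Space E] [MeasurableSpace E]
    [OpensMeasurableSpace E] {ξ : Measure E} [IsProbabilityMeasure ξ] {μ : E}
    (hμ : ∀ f : E →L[ℝ] ℝ, f μ = ∫ ν, f ν ∂ξ) {K A B : Set E} (hK : MeasurableSet K)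
    (hKA : K ⊆ A) (hA : IsCompact A) (hAc : Convex ℝ A) (hAne : A.Nonempty)
    (hB : IsCompact B) (hBc : Convex ℝ B) (hξB : ∀ᵐ ν ∂ξ, ν ∈ B) :
    μ ∈ ξ.real K • A + (1 - ξ.real K) • B := by
  set t := ξ.real K
  refine ((hA.smul t).add (hB.smul (1 - t))).isClosed.mem_of_forall_exists_clm_le
    ((hAc.smul t).add (hBc.smul _)) fun f => ?_
  obtain ⟨a, ha, hfa⟩ := hA.exists_isMinOn hAne f.continuous.continuousOn
  obtain ⟨b, hb, hfb⟩ := hB.exists_isMinOn hξB.exists f.continuous.continuousOn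
  refine ⟨t • a + (1 - t) • b, add_mem_add (smul_mem_smul_set ha) (smul_mem_smul_set hb), ?_⟩
  have hlow : ∀ᵐ ν ∂ξ, K.indicator (fun _ => f a) ν + Kᶜ.indicator (fun _ => f b) ν ≤ f ν := by
    filter_upwards [hξB] with ν hν
    by_cases hνK : ν ∈ K
    · simpa [hνK] using hfa (hKA hνK)
    · simpa [hνK] using hfb hν
  calc f (t • a + (1 - t) • b)
      = ∫ ν, (K.indicator (fun _ => f a) ν + Kᶜ.indicator (fun _ => f b) ν) ∂ξ := by
        rw [integral_add ((integrable_const _).indicator hK)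
            ((integrable_const _).indicator hK.compl),
          integral_indicator_const _ hK, integral_indicator_const _ hK.compl,
          probReal_compl_eq_one_sub hK]
        simp [t]
    _ ≤ ∫ ν, f ν ∂ξ := integral_mono_ae
        (((integrable_const _).indicator hK).add ((integrable_const _).indicator hK.compl))
        (Measure.restrict_eq_self_of_ae_mem hξB ▸
          f.continuous.continuousOn.integrableOn_compact hB) hlow
    _ = f μ := (hμ f).symm

end LocallyConvex

section Metric

variable {E : Type*} [AddCommGroup E] [Module ℝ E] [MetricSpace E]
  [IsTopologicalAddGroup E] [ContinuousSMul ℝ E] [LocallyConvexSpace ℝ E]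

theorem exists_pos_le_dist_smul_add_smul {M : Set E} (hM : IsCompact M) (hMc : Convex ℝ M)
    (hext : IsClosed (M.extremePoints ℝ)) {δ r : ℝ} (hδ : 0 < δ) (hr : 0 < r) :
    ∃ γ > 0, ∀ m ∈ M.extremePoints ℝ, ∀ t ∈ Icc δ 1,
      ∀ x ∈ closure (convexHull ℝ (M \ ball m r)), ∀ y ∈ M, γ ≤ dist (t • x + (1 - t) • y) m := by
  by_contra! h
  choose m hm t ht x hx y hy hdist using fun n : ℕ => h (1 / (n + 1)) Nat.one_div_pos_of_nat
  have hxM : ∀ n, x n ∈ M := fun n =>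
    closure_minimal (convexHull_min sdiff_subset hMc) hM.isClosed (hx n)
  have hextM : IsCompact (M.extremePoints ℝ) := hM.of_isClosed_subset hext extremePoints_subset
  obtain ⟨⟨t₀, x₀, y₀, m₀⟩, ⟨ht₀, hx₀M, hy₀, hm₀⟩, φ, hφ, hlim⟩ :=
    (isCompact_Icc.prod (hM.prod (hM.prod hextM))).tendsto_subseq
      (x := fun n => (t n, x n, y n, m n)) fun n => ⟨ht n, hxM n, hy n, hm n⟩
  dsimp only at ht₀ hx₀M hy₀ hm₀
  simp only [nhds_prod_eq, tendsto_prod_iff', Function.comp_def] at hlim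
  obtain ⟨htlim, hxlim, hylim, hmlim⟩ := hlim
  have hcomb : t₀ • x₀ + (1 - t₀) • y₀ = m₀ := by
    refine dist_eq_zero.1 (tendsto_nhds_unique
      (((htlim.smul hxlim).add ((tendsto_const_nhds.sub htlim).smul hylim)).dist hmlim) ?_)
    refine squeeze_zero (fun _ => dist_nonneg) (fun k => (hdist (φ k)).le) ?_
    exact tendsto_one_div_add_atTop_nhds_zero_nat.comp hφ.tendsto_atTop
  have hx₀ : x₀ ∈ closure (convexHull ℝ (M \ ball m₀ (r / 2))) := by
    refine isClosed_closure.mem_of_tendsto hxlim ?_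
    filter_upwards [hmlim (ball_mem_nhds m₀ (half_pos hr))] with k hk
    refine closure_mono (convexHull_mono (sdiff_subset_sdiff_right ?_)) (hx (φ k))
    have hk : dist (m (φ k)) m₀ < r / 2 := hk
    exact ball_subset_ball' (by rw [dist_comm]; linarith)
  rw [eq_of_smul_add_smul_mem_extremePoints hm₀ hx₀M hy₀ (hδ.trans_le ht₀.1) ht₀.2 hcomb] at hx₀
  exact notMem_closure_convexHull_diff_of_mem_extremePoints hM hMc hm₀
    (ball_mem_nhds m₀ (half_pos hr)) hx₀

end Metric

theorem barycenter_mass_near_extreme_point_uniform_of_closed_extremePoints_general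
    {V : Type*} [AddCommGroup V] [Module ℝ V] [TopologicalSpace V]
    [IsTopologicalAddGroup V] [ContinuousSMul ℝ V] [LocallyConvexSpace ℝ V]
    [MeasurableSpace V] [BorelSpace V]
    (d : V → V → ℝ)
    (hd_eq : ∀ a b : V, d a b = 0 ↔ a = b)
    (hd_symm : ∀ a b : V, d a b = d b a)
    (hd_tri : ∀ a b c : V, d a c ≤ d a b + d b c)
    (hd_top : ∀ (x : V) (s : Set V), s ∈ nhds x ↔ ∃ ε > 0, {y : V | d x y < ε} ⊆ s)
    (M : Set V) (hMcomp : IsCompact M) (hMconv : Convex ℝ M)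
    (hext_closed : IsClosed (Set.extremePoints ℝ M))
    (ε : ℝ) (hε : 0 < ε) :
    ∃ γ > 0, ∀ μ₀ ∈ Set.extremePoints ℝ M, ∀ (ξ : Measure V) (μ : V),
      IsProbabilityMeasure ξ → ξ M = 1 →
      (∀ φ : V →L[ℝ] ℝ, φ μ = ∫ ν, φ ν ∂ξ) →
      d μ μ₀ < γ → (ξ (M \ {ν : V | d ν μ₀ < ε})).toReal < ε := by
  let _ : MetricSpace V := .ofDistTopology d (fun x => (hd_eq x x).2 rfl) hd_symm hd_tri
    (fun s => isOpen_iff_mem_nhds.trans (forall₂_congr fun x _ => hd_top x s))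
    (fun x y => (hd_eq x y).1)
  obtain ⟨γ, hγ, hfar⟩ := exists_pos_le_dist_smul_add_smul hMcomp hMconv hext_closed hε hε
  refine ⟨γ, hγ, fun m hm ξ μ _ hξM hμ hclose => ?_⟩
  by_contra! hmass
  change ε ≤ ξ.real (M \ ball m ε) at hmass
  have hK : IsClosed (M \ ball m ε) := hMcomp.isClosed.sdiff isOpen_ball
  have hKne : (M \ ball m ε).Nonempty := nonempty_of_measure_ne_zero fun h => by
    rw [measureReal_def, h, ENNReal.toReal_zero] at hmass
    linarith
  have hA : IsCompact (closure (convexHull ℝ (M \ ball m ε))) :=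
    hMcomp.of_isClosed_subset isClosed_closure
      (closure_minimal (convexHull_min sdiff_subset hMconv) hMcomp.isClosed)
  obtain ⟨-, ⟨x, hx, rfl⟩, -, ⟨y, hy, rfl⟩, hμxy⟩ := mem_smul_add_smul_of_forall_clm_eq_integral hμ
    hK.measurableSet (subset_convexHull ℝ _ |>.trans subset_closure) hA
    (convex_convexHull ℝ _).closure (hKne.mono (subset_convexHull ℝ _ |>.trans subset_closure))
    hMcomp hMconv ((mem_ae_iff_prob_eq_one hMcomp.isClosed.measurableSet).2 hξM)
  subst hμxy
  exact (hfar m hm _ ⟨hmass, measureReal_le_one⟩ x hx y hy).not_gt hclose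

theorem barycenter_mass_near_extreme_point_uniform_of_closed_extremePoints
    {V : Type*} [AddCommGroup V] [Module ℝ V] [TopologicalSpace V]
    [IsTopologicalAddGroup V] [ContinuousSMul ℝ V] [LocallyConvexSpace ℝ V]
    [MeasurableSpace V] [BorelSpace V]
    (d : V → V → ℝ)
    (hd_eq : ∀ a b : V, d a b = 0 ↔ a = b)
    (hd_symm : ∀ a b : V, d a b = d b a)
    (hd_tri : ∀ a b c : V, d a c ≤ d a b + d b c)
    (hd_top : ∀ (x : V) (s : Set V), s ∈ nhds x ↔ ∃ ε > 0, {y : V | d x y < ε} ⊆ s)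
    (hd_convex : ∀ (a a' b b' : V) (t : ℝ), 0 ≤ t → t ≤ 1 →
      d (t • a + (1 - t) • b) (t • a' + (1 - t) • b') ≤ t * d a a' + (1 - t) * d b b')
    (M : Set V) (hMcomp : IsCompact M) (hMconv : Convex ℝ M)
    (hext_closed : IsClosed (Set.extremePoints ℝ M))
    (ε : ℝ) (hε : 0 < ε) :
    ∃ γ > 0, ∀ μ₀ ∈ Set.extremePoints ℝ M, ∀ (ξ : Measure V) (μ : V),
      IsProbabilityMeasure ξ → ξ M = 1 →
      (∀ φ : V →L[ℝ] ℝ, φ μ = ∫ ν, φ ν ∂ξ) →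
      d μ μ₀ < γ → (ξ (M \ {ν : V | d ν μ₀ < ε})).toReal < ε :=
  barycenter_mass_near_extreme_point_uniform_of_closed_extremePoints_general d hd_eq hd_symm hd_tri
    hd_top M hMcomp hMconv hext_closed ε hε
end

section
/- Let G be a countable group, let K, F ⊆ G be finite sets, and let ε > 0. If F is (K, ε)-invariant, then |F_K|/|F| > 1 − ε|K|, where F_K = {g ∈ F : Kg ⊆ F} is the K-core of F. -/
open scoped Pointwise symmDiff

/-- If a finite set `F` is `(K, ε)`-invariant (i.e. `|F △ KF| < ε |F|`), then the
`K`-core `F_K = {g ∈ F : Kg ⊆ F}` satisfies `|F_K| / |F| > 1 - ε |K|`. -/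
theorem core_large_of_invariant
    {G : Type*} [Group G] [Countable G] [Infinite G] [DecidableEq G]
    (K F : Finset G) (hK : K.Nonempty) (ε : ℝ) (hε : 0 < ε)
    (hinv : ((F ∆ (K * F)).card : ℝ) < ε * (F.card : ℝ)) :
    1 - ε * (K.card : ℝ) <
      (((F.filter fun g => ∀ k ∈ K, k * g ∈ F).card : ℝ)) / (F.card : ℝ) := by
  set C := F.filter fun g => ∀ k ∈ K, k * g ∈ F with hC
  -- F is nonempty
  have hFne : F.Nonempty := by
    by_contra h
    rw [Finset.not_nonempty_iff_eq_empty] at h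
    subst h
    simp at hinv
  have hFpos : (0 : ℝ) < F.card := by exact_mod_cast Finset.card_pos.mpr hFne
  -- F \ C ⊆ K⁻¹ * (K*F \ F)
  have hsub : F \ C ⊆ K⁻¹ * ((K * F) \ F) := by
    intro g hg
    rw [Finset.mem_sdiff] at hg
    obtain ⟨hgF, hgC⟩ := hg
    rw [hC, Finset.mem_filter] at hgC
    push_neg at hgC
    obtain ⟨k, hk, hkg⟩ := hgC hgF
    refine Finset.mem_mul.mpr ⟨k⁻¹, Finset.inv_mem_inv hk, k * g, ?_, by group⟩
    exact Finset.mem_sdiff.mpr ⟨Finset.mul_mem_mul hk hgF, hkg⟩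
  have h1 : (F \ C).card ≤ K.card * ((K * F) \ F).card := by
    calc (F \ C).card ≤ (K⁻¹ * ((K * F) \ F)).card := Finset.card_le_card hsub
      _ ≤ K⁻¹.card * ((K * F) \ F).card := Finset.card_mul_le
      _ = K.card * ((K * F) \ F).card := by rw [Finset.card_inv]
  have h2 : ((K * F) \ F).card ≤ (F ∆ (K * F)).card := by
    apply Finset.card_le_card
    intro x hx
    rw [Finset.mem_symmDiff]
    rw [Finset.mem_sdiff] at hx
    exact Or.inr ⟨hx.1, hx.2⟩
  -- card bound over ℝ
  have hCF : C ⊆ F := Finset.filter_subset _ _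
  have hcard : (F.card : ℝ) - C.card = (F \ C).card := by
    rw [Finset.card_sdiff_of_subset hCF]
    have := Finset.card_le_card hCF
    push_cast [Nat.cast_sub this]
    ring
  have hKpos : (0 : ℝ) ≤ K.card := by positivity
  have key : (F.card : ℝ) - C.card < ε * K.card * F.card := by
    rw [hcard]
    calc ((F \ C).card : ℝ) ≤ K.card * ((K * F) \ F).card := by exact_mod_cast h1
      _ ≤ K.card * (F ∆ (K * F)).card := by
          apply mul_le_mul_of_nonneg_left _ hKpos
          exact_mod_cast h2
      _ < K.card * (ε * F.card) := by
          apply mul_lt_mul_of_pos_left hinv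
          have : (0 : ℕ) < K.card := Finset.card_pos.mpr hK
          exact_mod_cast this
      _ = ε * K.card * F.card := by ring
  rw [lt_div_iff₀ hFpos]
  nlinarith [key]
end

section
/- Let G be a countable group, let K ⊆ G be a finite set, let ε > 0, and let F ⊆ G be a finite (K, ε/2)-invariant set. Then the set L = ⋃_{f∈F} {(g, gf) : g ∈ K} ⊆ G × G is an ε-modification of the set K × F ⊆ G × G, i.e., |L △ (K × F)|/|K × F| < ε. -/
open scoped Pointwise symmDiff

/-- If `F` is `(K, ε/2)`-invariant (i.e. `|F △ KF| < (ε/2) |F|`), then the set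
`L = ⋃_{f ∈ F} {(g, gf) : g ∈ K}` is an `ε`-modification of `K × F` in `G × G`. -/
theorem diagonal_union_is_modification_of_product
    {G : Type*} [Group G] [Countable G] [Infinite G] [DecidableEq G]
    (K F : Finset G) (hK : K.Nonempty) (ε : ℝ) (hε : 0 < ε)
    (hinv : ((F ∆ (K * F)).card : ℝ) < (ε / 2) * (F.card : ℝ)) :
    ((((K ×ˢ F).image fun p : G × G => (p.1, p.1 * p.2)) ∆ (K ×ˢ F)).card : ℝ) <
      ε * ((K ×ˢ F).card : ℝ) := by
  have hmemL : ∀ a b : G, (a, b) ∈ (K ×ˢ F).image (fun p : G × G => (p.1, p.1 * p.2)) ↔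
      a ∈ K ∧ b ∈ a • F := by
    intro a b
    simp only [Finset.mem_image, Finset.mem_product, Finset.mem_smul_finset, Prod.mk.injEq,
      Prod.exists, smul_eq_mul]
    constructor
    · rintro ⟨g, f, ⟨hg, hf⟩, rfl, rfl⟩
      exact ⟨hg, f, hf, rfl⟩
    · rintro ⟨hg, f, hf, rfl⟩
      exact ⟨a, f, ⟨hg, hf⟩, rfl, rfl⟩
  have key : ((K ×ˢ F).image fun p : G × G => (p.1, p.1 * p.2)) ∆ (K ×ˢ F)
      = K.biUnion (fun g => {g} ×ˢ ((g • F) ∆ F)) := by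
    ext ⟨a, b⟩
    simp only [Finset.mem_symmDiff, hmemL, Finset.mem_product, Finset.mem_biUnion,
      Finset.mem_singleton]
    constructor
    · rintro (⟨⟨ha, hb⟩, h⟩ | ⟨⟨ha, hb⟩, h⟩)
      · exact ⟨a, ha, rfl, Or.inl ⟨hb, fun hbF => h ⟨ha, hbF⟩⟩⟩
      · exact ⟨a, ha, rfl, Or.inr ⟨hb, fun hbF => h ⟨ha, hbF⟩⟩⟩
    · rintro ⟨g, hg, rfl, (⟨h1, h2⟩ | ⟨h1, h2⟩)⟩
      · exact Or.inl ⟨⟨hg, h1⟩, fun h => h2 h.2⟩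
      · exact Or.inr ⟨⟨hg, h1⟩, fun h => h2 h.2⟩
  have hcard : (((K ×ˢ F).image fun p : G × G => (p.1, p.1 * p.2)) ∆ (K ×ˢ F)).card
      = ∑ g ∈ K, ((g • F) ∆ F).card := by
    rw [key, Finset.card_biUnion]
    · refine Finset.sum_congr rfl fun g _ => ?_
      simp [Finset.card_product]
    · intro g hg g' hg' hne
      simp only [Finset.disjoint_left]
      rintro ⟨a, b⟩ hab hab'
      simp only [Finset.mem_product, Finset.mem_singleton] at hab hab'
      exact hne (hab.1.symm.trans hab'.1)
  -- bound each fiber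
  have hfiber : ∀ g ∈ K, ((g • F) ∆ F).card ≤ 2 * (F ∆ (K * F)).card := by
    intro g hg
    have hsub : (g • F) \ F ⊆ F ∆ (K * F) := by
      intro x hx
      rw [Finset.mem_sdiff] at hx
      rw [Finset.mem_symmDiff]
      refine Or.inr ⟨?_, hx.2⟩
      obtain ⟨f, hf, rfl⟩ := Finset.mem_smul_finset.1 hx.1
      exact Finset.mul_mem_mul hg hf
    have h1 : ((g • F) \ F).card ≤ (F ∆ (K * F)).card := Finset.card_le_card hsub
    have h2 : (F \ (g • F)).card = ((g • F) \ F).card := by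
      apply Finset.card_sdiff_comm
      exact (Finset.card_smul_finset g F).symm
    have h3 : ((g • F) ∆ F).card = ((g • F) \ F).card + (F \ (g • F)).card := by
      rw [symmDiff_def, Finset.sup_eq_union, Finset.card_union_of_disjoint]
      exact disjoint_sdiff_sdiff
    omega
  have hsum : (((K ×ˢ F).image fun p : G × G => (p.1, p.1 * p.2)) ∆ (K ×ˢ F)).card
      ≤ K.card * (2 * (F ∆ (K * F)).card) := by
    rw [hcard]
    calc ∑ g ∈ K, ((g • F) ∆ F).card ≤ ∑ _g ∈ K, 2 * (F ∆ (K * F)).card :=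
          Finset.sum_le_sum hfiber
      _ = K.card * (2 * (F ∆ (K * F)).card) := by rw [Finset.sum_const, smul_eq_mul]
  have hKpos : (0 : ℝ) < K.card := by
    exact_mod_cast Finset.card_pos.2 hK
  have hR : ((((K ×ˢ F).image fun p : G × G => (p.1, p.1 * p.2)) ∆ (K ×ˢ F)).card : ℝ)
      ≤ (K.card : ℝ) * (2 * ((F ∆ (K * F)).card : ℝ)) := by
    exact_mod_cast hsum
  have hprod : ((K ×ˢ F).card : ℝ) = (K.card : ℝ) * (F.card : ℝ) := by
    rw [Finset.card_product]; push_cast; ring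
  rw [hprod]
  nlinarith [hR, hinv, hKpos]
end
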